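/- Let $0 < H < 1/2$, set $p = 2/(1-2H)$, and for $t_i > 0$, $\Delta t > 0$ define $G(u, v) = \frac{1 - e^{-2ut_i}}{2u} \cdot \frac{1 - e^{-2vt_i}}{2v} \cdot (1 - e^{-(u+v)\Delta t})$ for $u, v > 0$. Then $\iint_{\{u = \theta^p, v = \eta^p : \theta^p + \eta^p \ge \Delta t^{-1},\ \theta, \eta \ge 0\}} G(\theta^p, \eta^p)\, d\theta\, d\eta = O(\Delta t^{1 - 1/p}) = O(\Delta t^{H + 1/2})$ as $\Delta t \to 0$, with constant depending on $t_i$ and $p$ but not on $\Delta t$. -/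

import Mathlib

open MeasureTheory Real Set

/-!
Each factor `(1 - e^{-2ut})/(2u)` is at most `min t (2u)⁻¹` and `1 - e^{-(u+v)Δt} ≤ 1`, so the
integrand is dominated by `f(θ) f(η)` with `f(x) = min t (2x^p)⁻¹`, which is integrable because
`p > 1`. If `θ^p + η^p ≥ Δt⁻¹` then `θ` or `η` is at least `a = (2Δt)^{-1/p}`, so the integral is
at most `2 ‖f‖₁ ∫_a^∞ f ≤ ‖f‖₁ a^{1-p}/(p-1)`, and `a^{1-p} = (2Δt)^{1-1/p}`.
-/

lemma one_sub_exp_neg_div_nonneg {u t : ℝ} (hu : 0 ≤ u) (ht : 0 ≤ t) :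
    0 ≤ (1 - exp (-2 * u * t)) / (2 * u) :=
  div_nonneg (by simp only [sub_nonneg, exp_le_one_iff]; nlinarith) (by positivity)

lemma one_sub_exp_neg_div_le_min {u t : ℝ} (hu : 0 ≤ u) (ht : 0 ≤ t) :
    (1 - exp (-2 * u * t)) / (2 * u) ≤ min t (2 * u)⁻¹ := by
  rcases hu.eq_or_lt with rfl | hu
  · simp [ht]
  refine le_min ?_ ?_
  · rw [div_le_iff₀ (by positivity)]
    linarith [add_one_le_exp (-2 * u * t)]
  · rw [← one_div]
    gcongr
    linarith [exp_nonneg (-2 * u * t)]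

lemma setIntegral_mul_le_of_subset_prod_union {α β : Type*} [MeasurableSpace α]
    [MeasurableSpace β] {μ : Measure α} {ν : Measure β} [SFinite μ] [SFinite ν]
    {f : α → ℝ} {g : β → ℝ} (hf0 : 0 ≤ f) (hg0 : 0 ≤ g) (hf : Integrable f μ)
    (hg : Integrable g ν) {S : Set (α × β)} {A : Set α} {B : Set β}
    (hS : S ⊆ A ×ˢ univ ∪ univ ×ˢ B) :
    ∫ q in S, f q.1 * g q.2 ∂μ.prod ν ≤
      (∫ x in A, f x ∂μ) * (∫ y, g y ∂ν) + (∫ x, f x ∂μ) * ∫ y in B, g y ∂ν := by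
  have hfg : Integrable (fun q : α × β => f q.1 * g q.2) (μ.prod ν) := hf.mul_prod hg
  calc ∫ q in S, f q.1 * g q.2 ∂μ.prod ν
      ≤ ∫ q, f q.1 * g q.2
          ∂((μ.prod ν).restrict (A ×ˢ univ) + (μ.prod ν).restrict (univ ×ˢ B)) :=
        integral_mono_measure
          ((Measure.restrict_mono hS le_rfl).trans (Measure.restrict_union_le _ _))
          (ae_of_all _ fun q => mul_nonneg (hf0 q.1) (hg0 q.2))
          (hfg.restrict.add_measure hfg.restrict)
    _ = _ := by
        rw [integral_add_measure hfg.restrict hfg.restrict, setIntegral_prod_mul,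
          setIntegral_prod_mul, setIntegral_univ, setIntegral_univ]

lemma subset_prod_union_of_le_rpow_add_rpow {p c a : ℝ} (hp : 0 < p)
    (hc : 2 * a ^ p ≤ c) :
    {q : ℝ × ℝ | 0 ≤ q.1 ∧ 0 ≤ q.2 ∧ c ≤ q.1 ^ p + q.2 ^ p} ⊆ Ici a ×ˢ univ ∪ univ ×ˢ Ici a := by
  rintro q ⟨hx, hy, hxy⟩
  by_contra h
  simp only [mem_union, mem_prod, mem_Ici, mem_univ, and_true, true_and, not_or, not_le] at h
  linarith [rpow_lt_rpow hx h.1 hp, rpow_lt_rpow hy h.2 hp]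

-- Cut off at `x < 0`, where `x ^ p` is not the power the paper means.
noncomputable def expFactorMajorant (t p x : ℝ) : ℝ := if 0 ≤ x then min t (2 * x ^ p)⁻¹ else 0

section expFactorMajorant

variable {t p : ℝ}

lemma expFactorMajorant_nonneg (ht : 0 ≤ t) (x : ℝ) : 0 ≤ expFactorMajorant t p x := by
  unfold expFactorMajorant
  split_ifs
  · positivity
  · rfl

lemma expFactorMajorant_le (ht : 0 ≤ t) (x : ℝ) : expFactorMajorant t p x ≤ t := by
  unfold expFactorMajorant
  split_ifs
  · exact min_le_left _ _
  · exact ht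

lemma expFactorMajorant_le_inv {x : ℝ} (hx : 0 ≤ x) : expFactorMajorant t p x ≤ (2 * x ^ p)⁻¹ := by
  simp only [expFactorMajorant, if_pos hx, min_le_right]

lemma measurable_expFactorMajorant : Measurable (expFactorMajorant t p) :=
  Measurable.ite measurableSet_Ici (by fun_prop) measurable_const

lemma one_sub_exp_neg_div_le_expFactorMajorant (ht : 0 ≤ t) {x : ℝ} (hx : 0 ≤ x) :
    (1 - exp (-2 * x ^ p * t)) / (2 * x ^ p) ≤ expFactorMajorant t p x := by
  simpa only [expFactorMajorant, if_pos hx] using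
    one_sub_exp_neg_div_le_min (rpow_nonneg hx p) ht

lemma expFactorMajorant_le_rpow_neg {x : ℝ} (hx : 0 < x) :
    expFactorMajorant t p x ≤ x ^ (-p) / 2 := by
  calc expFactorMajorant t p x ≤ (2 * x ^ p)⁻¹ := expFactorMajorant_le_inv hx.le
    _ = x ^ (-p) / 2 := by rw [rpow_neg hx.le, mul_inv, inv_eq_one_div 2]; ring

lemma integrable_expFactorMajorant (ht : 0 ≤ t) (hp : 1 < p) :
    Integrable (expFactorMajorant t p) := by
  have hmeas : AEStronglyMeasurable (expFactorMajorant t p) :=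
    measurable_expFactorMajorant.aestronglyMeasurable
  have hnorm : ∀ x, ‖expFactorMajorant t p x‖ = expFactorMajorant t p x := fun x =>
    norm_of_nonneg (expFactorMajorant_nonneg ht x)
  rw [← integrableOn_univ, ← Iic_union_Ioi (a := 1)]
  refine IntegrableOn.union ?_ ?_
  · rw [← Iio_union_Icc_eq_Iic zero_le_one]
    refine IntegrableOn.union ?_ ?_
    · refine (integrableOn_congr_fun (fun x hx => ?_) measurableSet_Iio).mpr integrableOn_zero
      simp [expFactorMajorant, not_le.mpr (mem_Iio.mp hx)]
    · refine Integrable.mono' (integrableOn_const measure_Icc_lt_top.ne) hmeas.restrict ?_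
      exact ae_of_all _ fun x => (hnorm x).trans_le (expFactorMajorant_le ht x)
  · refine Integrable.mono'
      ((integrableOn_Ioi_rpow_of_lt (by linarith : -p < -1) one_pos).div_const 2) hmeas.restrict ?_
    refine (ae_restrict_iff' measurableSet_Ioi).mpr (ae_of_all _ fun x hx => ?_)
    exact (hnorm x).trans_le (expFactorMajorant_le_rpow_neg (one_pos.trans hx))

lemma setIntegral_Ici_expFactorMajorant_le (ht : 0 ≤ t) (hp : 1 < p) {a : ℝ} (ha : 0 < a) :
    ∫ x in Ici a, expFactorMajorant t p x ≤ a ^ (1 - p) / (2 * (p - 1)) := by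
  have hp' : -p < -1 := by linarith
  calc ∫ x in Ici a, expFactorMajorant t p x
      = ∫ x in Ioi a, expFactorMajorant t p x := integral_Ici_eq_integral_Ioi
    _ ≤ ∫ x in Ioi a, x ^ (-p) / 2 :=
        setIntegral_mono_on (integrable_expFactorMajorant ht hp).integrableOn
          ((integrableOn_Ioi_rpow_of_lt hp' ha).div_const 2) measurableSet_Ioi
          fun x hx => expFactorMajorant_le_rpow_neg (ha.trans hx)
    _ = a ^ (1 - p) / (2 * (p - 1)) := by
        rw [integral_div, integral_Ioi_rpow_of_lt hp' ha, neg_add_eq_sub]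
        have : p - 1 ≠ 0 := by linarith
        rw [show (1 : ℝ) - p = -(p - 1) by ring]
        field_simp

lemma setIntegral_exp_factors_le (ht : 0 ≤ t) (hp : 1 < p) {Δt c : ℝ} (hΔt : 0 ≤ Δt) :
    ∫ q in {q : ℝ × ℝ | 0 ≤ q.1 ∧ 0 ≤ q.2 ∧ c ≤ q.1 ^ p + q.2 ^ p},
        (1 - exp (-2 * q.1 ^ p * t)) / (2 * q.1 ^ p) *
          ((1 - exp (-2 * q.2 ^ p * t)) / (2 * q.2 ^ p)) *
            (1 - exp (-(q.1 ^ p + q.2 ^ p) * Δt)) ≤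
      ∫ q in {q : ℝ × ℝ | 0 ≤ q.1 ∧ 0 ≤ q.2 ∧ c ≤ q.1 ^ p + q.2 ^ p},
        expFactorMajorant t p q.1 * expFactorMajorant t p q.2 := by
  have hS : MeasurableSet {q : ℝ × ℝ | 0 ≤ q.1 ∧ 0 ≤ q.2 ∧ c ≤ q.1 ^ p + q.2 ^ p} := by
    measurability
  have hf := integrable_expFactorMajorant ht hp
  refine integral_mono_of_nonneg (ae_restrict_of_forall_mem hS ?_)
    (by rw [Measure.volume_eq_prod]; exact (hf.mul_prod hf).restrict)
    (ae_restrict_of_forall_mem hS ?_) <;> rintro ⟨x, y⟩ ⟨hx, hy, -⟩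
  all_goals
    have hfx := one_sub_exp_neg_div_nonneg (rpow_nonneg hx p) ht
    have hfy := one_sub_exp_neg_div_nonneg (rpow_nonneg hy p) ht
  · have hdamp : 0 ≤ 1 - exp (-(x ^ p + y ^ p) * Δt) := by
      rw [sub_nonneg, exp_le_one_iff]
      exact mul_nonpos_of_nonpos_of_nonneg
        (neg_nonpos.mpr (add_nonneg (rpow_nonneg hx p) (rpow_nonneg hy p))) hΔt
    exact mul_nonneg (mul_nonneg hfx hfy) hdamp
  · refine (mul_le_of_le_one_right (mul_nonneg hfx hfy) (sub_le_self _ (exp_nonneg _))).trans ?_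
    exact mul_le_mul (one_sub_exp_neg_div_le_expFactorMajorant ht hx)
      (one_sub_exp_neg_div_le_expFactorMajorant ht hy) hfy (expFactorMajorant_nonneg ht x)

lemma setIntegral_expFactorMajorant_mul_le (ht : 0 ≤ t) (hp : 1 < p) {a c : ℝ} (ha : 0 < a)
    (hc : 2 * a ^ p ≤ c) :
    ∫ q in {q : ℝ × ℝ | 0 ≤ q.1 ∧ 0 ≤ q.2 ∧ c ≤ q.1 ^ p + q.2 ^ p},
        expFactorMajorant t p q.1 * expFactorMajorant t p q.2 ≤
      (∫ x, expFactorMajorant t p x) * a ^ (1 - p) / (p - 1) := by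
  have hf := integrable_expFactorMajorant ht hp
  have hM : 0 ≤ ∫ x, expFactorMajorant t p x := integral_nonneg (expFactorMajorant_nonneg ht)
  have htail := setIntegral_Ici_expFactorMajorant_le ht hp ha
  rw [Measure.volume_eq_prod]
  calc _ ≤ (∫ x in Ici a, expFactorMajorant t p x) * (∫ x, expFactorMajorant t p x) +
          (∫ x, expFactorMajorant t p x) * ∫ x in Ici a, expFactorMajorant t p x :=
        setIntegral_mul_le_of_subset_prod_union (expFactorMajorant_nonneg ht)
          (expFactorMajorant_nonneg ht) hf hf
          (subset_prod_union_of_le_rpow_add_rpow (by linarith) hc)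
    _ ≤ a ^ (1 - p) / (2 * (p - 1)) * (∫ x, expFactorMajorant t p x) +
          (∫ x, expFactorMajorant t p x) * (a ^ (1 - p) / (2 * (p - 1))) := by
        gcongr
    _ = _ := by
        have : p - 1 ≠ 0 := by linarith
        field_simp
        ring

end expFactorMajorant

/-- High-frequency regime estimate: with `p = 2/(1-2H)` and
`G(u,v) = ((1-e^{-2ut_i})/(2u)) ((1-e^{-2vt_i})/(2v)) (1-e^{-(u+v)Δt})`, the integral of
`G(θ^p, η^p)` over `{θ, η ≥ 0 : θ^p + η^p ≥ Δt⁻¹}` is `O(Δt^{1-1/p}) = O(Δt^{H+1/2})`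
as `Δt → 0`, with constant independent of `Δt`. -/
theorem high_frequency_regime_estimate (H ti p : ℝ) (h0 : 0 < H) (h1 : H < 1 / 2)
    (hti : 0 < ti) (hp : p = 2 / (1 - 2 * H)) :
    ∃ C : ℝ, 0 < C ∧ ∀ Δt : ℝ, Δt ∈ Set.Ioo (0 : ℝ) 1 →
      (∫ q in {q : ℝ × ℝ | 0 ≤ q.1 ∧ 0 ≤ q.2 ∧ Δt⁻¹ ≤ q.1 ^ p + q.2 ^ p},
          ((1 - Real.exp (-2 * q.1 ^ p * ti)) / (2 * q.1 ^ p)) *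
            ((1 - Real.exp (-2 * q.2 ^ p * ti)) / (2 * q.2 ^ p)) *
              (1 - Real.exp (-(q.1 ^ p + q.2 ^ p) * Δt))) ≤
        C * Δt ^ (1 - 1 / p) ∧ C * Δt ^ (1 - 1 / p) = C * Δt ^ (H + 1 / 2) := by
  have hp1 : 1 < p := by rw [hp, lt_div_iff₀ (by linarith)]; linarith
  have hexp : 1 - 1 / p = H + 1 / 2 := by rw [hp]; field_simp; ring
  set M := ∫ x, expFactorMajorant ti p x
  have hM : 0 ≤ M := integral_nonneg (expFactorMajorant_nonneg hti.le)
  refine ⟨M * 2 ^ (1 - 1 / p) / (p - 1) + 1, by positivity,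
    fun Δt ⟨hΔt, _⟩ => ⟨?_, by rw [hexp]⟩⟩
  set a := (2 * Δt) ^ (-p⁻¹)
  have ha : 0 < a := by positivity
  have ha_rpow : 2 * a ^ p = Δt⁻¹ := by
    rw [← rpow_mul (by positivity), neg_mul, inv_mul_cancel₀ (by positivity), rpow_neg_one,
      mul_inv, mul_inv_cancel_left₀ two_ne_zero]
  have ha_rpow_sub : a ^ (1 - p) = 2 ^ (1 - 1 / p) * Δt ^ (1 - 1 / p) := by
    rw [← rpow_mul (by positivity), mul_rpow zero_le_two hΔt.le]
    congr 2 <;> field_simp <;> ring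
  calc _ ≤ _ := setIntegral_exp_factors_le hti.le hp1 hΔt.le
    _ ≤ M * a ^ (1 - p) / (p - 1) := setIntegral_expFactorMajorant_mul_le hti.le hp1 ha ha_rpow.le
    _ = M * 2 ^ (1 - 1 / p) / (p - 1) * Δt ^ (1 - 1 / p) := by rw [ha_rpow_sub]; ring
    _ ≤ _ := by gcongr; linarith
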